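/- arXiv:1101.4111 — 4 statements merged into one kernel-verified Lean document; each statement's English description precedes it below -/
import Mathlib

section
/- Let $p: \call C \to \call D$ be a covering of acyclic categories, $\gamma = (e_1,\dots,e_k)$ an edge path in $\call D$ from $d$ to $d'$, and $c$ an object of $\call C$ with $p(c) = d$. Then there exists a unique edge path $\delta = (f_1,\dots,f_k)$ in $\call C$ starting at $c$ with $p(\delta) = \gamma$. -/
open CategoryTheory

/-- `C` is an acyclic (loop-free) category. -/
def IsAcyclicCat (C : Type*) [Category C] : Prop :=
  (∀ (a b : C) (f : a ⟶ b) (g : b ⟶ a), f ≫ g = 𝟙 a → g ≫ f = 𝟙 b → a = b) ∧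
  (∀ (a : C) (f : a ⟶ a), f = 𝟙 a)

/-- `p : C ⥤ D` is a covering of categories (bijective on stars and costars). -/
def IsCatCovering {C D : Type*} [Category C] [Category D] (p : C ⥤ D) : Prop :=
  ∀ c : C,
    Function.Bijective (fun x : Σ a : C, a ⟶ c =>
      (⟨p.obj x.1, p.map x.2⟩ : Σ d : D, d ⟶ p.obj c)) ∧
    Function.Bijective (fun x : Σ b : C, c ⟶ b =>
      (⟨p.obj x.1, p.map x.2⟩ : Σ d : D, p.obj c ⟶ d))

/-- An edge of a category: a morphism together with a direction of traversal
(`true` = forwards, `false` = backwards). -/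
def CatEdge (C : Type*) [Category C] := (Σ a b : C, a ⟶ b) × Bool

/-- The starting point of a traversed edge. -/
def edgeSrc {C : Type*} [Category C] (e : CatEdge C) : C :=
  bif e.2 then e.1.1 else e.1.2.1

/-- The endpoint of a traversed edge. -/
def edgeTgt {C : Type*} [Category C] (e : CatEdge C) : C :=
  bif e.2 then e.1.2.1 else e.1.1

/-- `IsEChain d l d'` : the list of traversed edges `l` is an edge path from
`d` to `d'`. -/
def IsEChain {C : Type*} [Category C] : C → List (CatEdge C) → C → Prop
  | d, [], d' => d = d'
  | d, e :: l, d' => edgeSrc e = d ∧ IsEChain (edgeTgt e) l d'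

/-- The image of a traversed edge under a functor. -/
def mapEdge {C D : Type*} [Category C] [Category D] (p : C ⥤ D) :
    CatEdge C → CatEdge D :=
  fun e => (⟨p.obj e.1.1, p.obj e.1.2.1, p.map e.1.2.2⟩, e.2)

/-! Edges out of `c` traversed forwards form the star `Σ b, c ⟶ b` and edges traversed backwards
the costar `Σ a, a ⟶ c`; a covering is bijective on both, so every edge out of `p c` has exactly
one lift out of `c`. Lifting edge by edge along the path gives existence and uniqueness. -/

section Arrows

variable {X : Type*} [Quiver X]

lemma Quiver.Star.mk_eq_of_arrow_eq {a b b' : X} {f : a ⟶ b} {f' : a ⟶ b'}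
    (h : (⟨a, b, f⟩ : Σ x y : X, x ⟶ y) = ⟨a, b', f'⟩) :
    Quiver.Star.mk f = Quiver.Star.mk f' :=
  eq_of_heq (Sigma.mk.inj_iff.mp h).2

lemma Quiver.Costar.mk_eq_of_arrow_eq {a a' b : X} {f : a ⟶ b} {f' : a' ⟶ b}
    (h : (⟨a, b, f⟩ : Σ x y : X, x ⟶ y) = ⟨a', b, f'⟩) :
    Quiver.Costar.mk f = Quiver.Costar.mk f' := by
  obtain ⟨rfl, h⟩ := Sigma.mk.inj_iff.mp h
  cases eq_of_heq h
  rfl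

end Arrows

section Lifting

variable {C D : Type*} [Category C] [Category D]

@[simp]
lemma edgeTgt_mapEdge (p : C ⥤ D) (e : CatEdge C) :
    edgeTgt (mapEdge p e) = p.obj (edgeTgt e) := by
  obtain ⟨_, _ | _⟩ := e <;> rfl

variable {p : C ⥤ D}

lemma IsCatCovering.edge_eq_of_mapEdge_eq (hp : IsCatCovering p) {e₁ e₂ : CatEdge C}
    (hsrc : edgeSrc e₁ = edgeSrc e₂) (h : mapEdge p e₁ = mapEdge p e₂) : e₁ = e₂ := by
  obtain ⟨⟨a₁, b₁, f₁⟩, dir₁⟩ := e₁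
  obtain ⟨⟨a₂, b₂, f₂⟩, dir₂⟩ := e₂
  obtain rfl : dir₁ = dir₂ := congrArg Prod.snd h
  replace h : (⟨p.obj a₁, p.obj b₁, p.map f₁⟩ : Σ x y : D, x ⟶ y) =
      ⟨p.obj a₂, p.obj b₂, p.map f₂⟩ := congrArg Prod.fst h
  cases dir₁
  · change b₁ = b₂ at hsrc
    subst hsrc
    obtain ⟨⟩ : (⟨a₁, f₁⟩ : Σ a, a ⟶ b₁) = ⟨a₂, f₂⟩ :=
      (hp b₁).1.injective (Quiver.Costar.mk_eq_of_arrow_eq h)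
    rfl
  · change a₁ = a₂ at hsrc
    subst hsrc
    obtain ⟨⟩ : (⟨b₁, f₁⟩ : Σ b, a₁ ⟶ b) = ⟨b₂, f₂⟩ :=
      (hp a₁).2.injective (Quiver.Star.mk_eq_of_arrow_eq h)
    rfl

lemma IsCatCovering.exists_edge_lift (hp : IsCatCovering p) {c : C} {e : CatEdge D}
    (he : edgeSrc e = p.obj c) : ∃ e' : CatEdge C, edgeSrc e' = c ∧ mapEdge p e' = e := by
  obtain ⟨⟨a, b, f⟩, _ | _⟩ := e
  · change b = p.obj c at he
    subst he
    obtain ⟨⟨a', f'⟩, hf'⟩ := (hp c).1.surjective ⟨a, f⟩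
    cases hf'
    exact ⟨(⟨a', c, f'⟩, false), rfl, rfl⟩
  · change a = p.obj c at he
    subst he
    obtain ⟨⟨b', f'⟩, hf'⟩ := (hp c).2.surjective ⟨b, f⟩
    cases hf'
    exact ⟨(⟨c, b', f'⟩, true), rfl, rfl⟩

lemma IsCatCovering.path_eq_of_map_eq (hp : IsCatCovering p) {c c₁ c₂ : C}
    {δ₁ δ₂ : List (CatEdge C)} (h₁ : IsEChain c δ₁ c₁) (h₂ : IsEChain c δ₂ c₂)
    (h : δ₁.map (mapEdge p) = δ₂.map (mapEdge p)) : δ₁ = δ₂ := by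
  induction δ₁ generalizing c δ₂ with
  | nil => exact (List.map_eq_nil_iff.mp h.symm).symm
  | cons e₁ δ₁ ih =>
    obtain _ | ⟨e₂, δ₂⟩ := δ₂
    · exact absurd h (List.cons_ne_nil _ _)
    · obtain ⟨he, hδ⟩ := List.cons_eq_cons.mp h
      obtain rfl := hp.edge_eq_of_mapEdge_eq (h₁.1.trans h₂.1.symm) he
      rw [ih h₁.2 h₂.2 hδ]

lemma IsCatCovering.exists_path_lift (hp : IsCatCovering p) {c : C} {d' : D}
    {γ : List (CatEdge D)} (hγ : IsEChain (p.obj c) γ d') :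
    ∃ δ : List (CatEdge C), (∃ c' : C, IsEChain c δ c') ∧ δ.map (mapEdge p) = γ := by
  induction γ generalizing c with
  | nil => exact ⟨[], ⟨c, rfl⟩, rfl⟩
  | cons e γ ih =>
    obtain ⟨e', hsrc, rfl⟩ := hp.exists_edge_lift hγ.1
    obtain ⟨δ, ⟨c', hδ⟩, rfl⟩ := ih (c := edgeTgt e') (by simpa using hγ.2)
    exact ⟨e' :: δ, ⟨c', hsrc, hδ⟩, rfl⟩

end Lifting

theorem unique_edge_path_lifting_general {C D : Type*} [Category C] [Category D]
    (p : C ⥤ D) (hp : IsCatCovering p)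
    (d d' : D) (γ : List (CatEdge D)) (hγ : IsEChain d γ d')
    (c : C) (hc : p.obj c = d) :
    ∃! δ : List (CatEdge C),
      (∃ c' : C, IsEChain c δ c') ∧ δ.map (mapEdge p) = γ := by
  subst hc
  obtain ⟨δ, ⟨c', hδ⟩, hmap⟩ := hp.exists_path_lift hγ
  refine ⟨δ, ⟨⟨c', hδ⟩, hmap⟩, ?_⟩
  rintro δ' ⟨⟨c'', hδ'⟩, hmap'⟩
  exact hp.path_eq_of_map_eq hδ' hδ (hmap'.trans hmap.symm)

/-- Unique lifting of edge paths along a covering of acyclic categories: given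
an edge path `γ` in `D` from `d` to `d'` and an object `c` over `d`, there is a
unique edge path in `C` starting at `c` which maps to `γ` under `p`. -/
theorem unique_edge_path_lifting {C D : Type*} [Category C] [Category D]
    (hC : IsAcyclicCat C) (hD : IsAcyclicCat D)
    (p : C ⥤ D) (hp : IsCatCovering p)
    (d d' : D) (γ : List (CatEdge D)) (hγ : IsEChain d γ d')
    (c : C) (hc : p.obj c = d) :
    ∃! δ : List (CatEdge C),
      (∃ c' : C, IsEChain c δ c') ∧ δ.map (mapEdge p) = γ :=
  unique_edge_path_lifting_general p hp d d' γ hγ c hc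
end

section
/- Let $p: \call C \to \call D$ be a Galois covering of acyclic categories with group $G = \mathrm{Aut}(p)$. Then $G$ acts transitively on each fiber $p^{-1}(m)$ over a morphism $m$ of $\call D$, and the induced functor $\call C / G \to \call D$ is an isomorphism of categories. -/
open CategoryTheory

/-- The total set of morphisms of a category. -/
def Mor (C : Type*) [Category C] := Σ a b : C, a ⟶ b

/-- The action of a functor on total morphisms. -/
def morMap {C D : Type*} [Category C] [Category D] (p : C ⥤ D) :
    Mor C → Mor D :=
  fun m => ⟨p.obj m.1, p.obj m.2.1, p.map m.2.2⟩

/-- The deck transformation group of `p` : automorphisms `φ` of `C` with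
`φ ⋙ p = p`. -/
def DeckSet {C D : Type*} [Category C] [Category D] (p : C ⥤ D) :
    Set (C ⥤ C) :=
  {φ | (∃ ψ : C ⥤ C, φ ⋙ ψ = 𝟭 C ∧ ψ ⋙ φ = 𝟭 C) ∧ φ ⋙ p = p}

/-!
A covering is determined on morphisms by its value on sources: two morphisms out of the same
object with the same image are equal, by injectivity on costars. A deck transformation moving
the source of `m` to the source of `m'` therefore moves `m` onto `m'` as soon as
`p m = p m'`, so transitivity on object fibres gives transitivity on morphism fibres.
Surjectivity follows from connectedness of `D`: star and costar surjectivity make the image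
of `p` closed under morphisms in both directions.
-/

namespace CategoryTheory

variable {C D : Type*} [Category C] [Category D]

theorem morMap_comp {E : Type*} [Category E] (φ : C ⥤ D) (p : D ⥤ E) (m : Mor C) :
    morMap (φ ⋙ p) m = morMap p (morMap φ m) :=
  rfl

theorem morMap_morMap_of_comp_eq {p : C ⥤ D} {φ : C ⥤ C} (hφ : φ ⋙ p = p) (m : Mor C) :
    morMap p (morMap φ m) = morMap p m := by
  rw [← morMap_comp, hφ]

namespace IsCatCovering

variable {p : C ⥤ D} (hp : IsCatCovering p)
include hp

theorem mor_eq_of_fst_eq {m m' : Mor C} (hsrc : m.1 = m'.1)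
    (h : morMap p m = morMap p m') : m = m' := by
  obtain ⟨a, b, f⟩ := m
  obtain ⟨a', b', f'⟩ := m'
  obtain rfl : a = a' := hsrc
  have himage : (⟨p.obj b, p.map f⟩ : Σ e : D, p.obj a ⟶ e) = ⟨p.obj b', p.map f'⟩ :=
    eq_of_heq (Sigma.mk.inj_iff.mp h).2
  rw [(hp a).2.injective (a₁ := ⟨b, f⟩) (a₂ := ⟨b', f'⟩) himage]

theorem morMap_eq_of_obj_fst_eq {φ : C ⥤ C} (hφ : φ ⋙ p = p) {m m' : Mor C}
    (hsrc : φ.obj m.1 = m'.1) (h : morMap p m = morMap p m') : morMap φ m = m' :=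
  hp.mor_eq_of_fst_eq hsrc (by rw [morMap_morMap_of_comp_eq hφ, h])

theorem mem_range_obj_iff_of_hom {d d' : D} (f : d ⟶ d') :
    d ∈ Set.range p.obj ↔ d' ∈ Set.range p.obj := by
  constructor
  · rintro ⟨c, rfl⟩
    obtain ⟨⟨b, _⟩, hb⟩ := (hp c).2.surjective ⟨d', f⟩
    exact ⟨b, congrArg Sigma.fst hb⟩
  · rintro ⟨c, rfl⟩
    obtain ⟨⟨b, _⟩, hb⟩ := (hp c).1.surjective ⟨d, f⟩
    exact ⟨b, congrArg Sigma.fst hb⟩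

theorem surjective_obj [Nonempty C] [IsPreconnected D] : Function.Surjective p.obj := by
  obtain ⟨c₀⟩ := ‹Nonempty C›
  exact induct_on_objects (Set.range p.obj) (Set.mem_range_self c₀)
    hp.mem_range_obj_iff_of_hom

theorem surjective_morMap [Nonempty C] [IsPreconnected D] :
    Function.Surjective (morMap p) := by
  rintro ⟨d, d', g⟩
  obtain ⟨c, rfl⟩ := hp.surjective_obj d
  obtain ⟨⟨b, f⟩, hb⟩ := (hp c).2.surjective ⟨d', g⟩
  exact ⟨⟨c, b, f⟩, congrArg (Sigma.mk (p.obj c)) hb⟩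

end IsCatCovering

end CategoryTheory

theorem galois_covering_quotient_iso_general {C D : Type*} [Category C] [Category D]
    [Nonempty C] [IsConnected D]
    (p : C ⥤ D) (hp : IsCatCovering p)
    (hGalois : ∀ c c' : C, p.obj c = p.obj c' →
      ∃ φ ∈ DeckSet p, φ.obj c = c') :
    (∀ m m' : Mor C, morMap p m = morMap p m' →
      ∃ φ ∈ DeckSet p, morMap φ m = m') ∧
    Function.Surjective p.obj ∧
    (∀ m : Mor D, ∃ mc : Mor C, morMap p mc = m) ∧
    (∀ c c' : C, p.obj c = p.obj c' ↔ ∃ φ ∈ DeckSet p, φ.obj c = c') ∧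
    (∀ m m' : Mor C, morMap p m = morMap p m' ↔
      ∃ φ ∈ DeckSet p, morMap φ m = m') := by
  have htrans : ∀ m m' : Mor C, morMap p m = morMap p m' →
      ∃ φ ∈ DeckSet p, morMap φ m = m' := fun m m' h => by
    obtain ⟨φ, hφ, hsrc⟩ := hGalois m.1 m'.1 (congrArg Sigma.fst h)
    exact ⟨φ, hφ, hp.morMap_eq_of_obj_fst_eq hφ.2 hsrc h⟩
  refine ⟨htrans, hp.surjective_obj, hp.surjective_morMap, fun c c' => ⟨hGalois c c', ?_⟩,
    fun m m' => ⟨htrans m m', ?_⟩⟩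
  · rintro ⟨φ, hφ, rfl⟩
    exact (Functor.congr_obj hφ.2 c).symm
  · rintro ⟨φ, hφ, rfl⟩
    exact (morMap_morMap_of_comp_eq hφ.2 m).symm

/-- Let `p : C → D` be a Galois covering of acyclic categories, with deck group
`G = Aut(p)` acting transitively on the fibers over objects.  Then `G` acts
transitively on the fiber over each morphism of `D`, and the induced functor
`C/G → D` is an isomorphism of categories: `p` is surjective on objects and on
morphisms, and two objects (resp. morphisms) of `C` have the same image iff
they lie in the same `G`-orbit — i.e. objects and morphisms of `D` correspond
bijectively to the `G`-orbits of objects and morphisms of `C`. -/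
theorem galois_covering_quotient_iso {C D : Type*} [Category C] [Category D]
    [Nonempty C] [IsConnected D]
    (hC : IsAcyclicCat C) (hD : IsAcyclicCat D)
    (p : C ⥤ D) (hp : IsCatCovering p)
    (hGalois : ∀ c c' : C, p.obj c = p.obj c' →
      ∃ φ ∈ DeckSet p, φ.obj c = c') :
    (∀ m m' : Mor C, morMap p m = morMap p m' →
      ∃ φ ∈ DeckSet p, morMap φ m = m') ∧
    Function.Surjective p.obj ∧
    (∀ m : Mor D, ∃ mc : Mor C, morMap p mc = m) ∧
    (∀ c c' : C, p.obj c = p.obj c' ↔ ∃ φ ∈ DeckSet p, φ.obj c = c') ∧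
    (∀ m m' : Mor C, morMap p m = morMap p m' ↔
      ∃ φ ∈ DeckSet p, morMap φ m = m') :=
  galois_covering_quotient_iso_general p hp hGalois
end

section
/- Let $\call C$ be an acyclic category with a group action $G \curvearrowright \call C$ which is the Galois group action of a covering map $\varphi : \call C \to \call D$. Then the Babson–Kozlov condition holds: for $t \geq 2$ and composable morphism chains $(m_1,\dots,m_{t-1},m_a)$ and $(m_1,\dots,m_{t-1},m_b)$ with $G m_a = G m_b$, there exists $g \in G$ with $g(m_a) = m_b$ and $g(m_i) = m_i$ for all $i < t$. Consequently $m_a = m_b$. -/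
open CategoryTheory

/-- A list of morphisms forms a composable chain. -/
def ChainOK {C : Type*} [Category C] : List (Mor C) → Prop
  | [] => True
  | [_] => True
  | m :: m' :: l => m.2.1 = m'.1 ∧ ChainOK (m' :: l)

/-!
Unique lifting through a covering: a functor `φ` over `p` (i.e. `φ ⋙ p = p`) that fixes an
object `a` must fix every morphism out of or into `a`, because `φ` maps the star and costar of
`a` to themselves compatibly with their bijections onto those of `p.obj a`. As `C` is connected,
such a `φ` then fixes all of `C`; the deck transformation carrying `m_a` to `m_b` fixes their
common domain `q`, so it is the identity.
-/

namespace IsCatCovering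

variable {C D : Type*} [Category C] [Category D] {p : C ⥤ D}

theorem costar_map_eq (hp : IsCatCovering p) {φ : C ⥤ C} (hφ : φ ⋙ p = p) {a b : C}
    (ha : φ.obj a = a) (f : a ⟶ b) :
    (⟨φ.obj b, eqToHom ha.symm ≫ φ.map f⟩ : Σ b', a ⟶ b') = ⟨b, f⟩ := by
  apply (hp a).2.injective
  have hf := Functor.congr_hom hφ f
  simp only [Functor.comp_map] at hf
  exact Sigma.ext (Functor.congr_obj hφ b) (by simp [hf, eqToHom_map])

theorem star_map_eq (hp : IsCatCovering p) {φ : C ⥤ C} (hφ : φ ⋙ p = p) {a b : C}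
    (ha : φ.obj a = a) (f : b ⟶ a) :
    (⟨φ.obj b, φ.map f ≫ eqToHom ha⟩ : Σ b', b' ⟶ a) = ⟨b, f⟩ := by
  apply (hp a).1.injective
  have hf := Functor.congr_hom hφ f
  simp only [Functor.comp_map] at hf
  exact Sigma.ext (Functor.congr_obj hφ b) (by simp [hf, eqToHom_map])

theorem obj_eq_self [IsConnected C] (hp : IsCatCovering p) {φ : C ⥤ C} (hφ : φ ⋙ p = p)
    {q : C} (hq : φ.obj q = q) (c : C) : φ.obj c = c := by
  refine induct_on_objects {c | φ.obj c = c} hq (fun f => ⟨fun ha => ?_, fun hb => ?_⟩) c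
  · exact congrArg Sigma.fst (hp.costar_map_eq hφ ha f)
  · exact congrArg Sigma.fst (hp.star_map_eq hφ hb f)

theorem morMap_eq_self [IsConnected C] (hp : IsCatCovering p) {φ : C ⥤ C} (hφ : φ ⋙ p = p)
    {q : C} (hq : φ.obj q = q) (m : Mor C) : morMap φ m = m := by
  obtain ⟨a, b, f⟩ := m
  have ha := hp.obj_eq_self hφ hq a
  have hcast : ∀ {a' : C} (h : a' = a) {c : C} (g : a' ⟶ c),
      HEq (⟨c, g⟩ : Σ c', a' ⟶ c') (⟨c, eqToHom h.symm ≫ g⟩ : Σ c', a ⟶ c') := by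
    rintro _ rfl _ g
    simp
  exact Sigma.ext ha ((hcast ha (φ.map f)).trans (hp.costar_map_eq hφ ha f).heq)

end IsCatCovering

theorem babson_kozlov_condition_general {C D : Type*} [Category C] [Category D]
    [IsConnected C]
    (p : C ⥤ D) (hp : IsCatCovering p)
    (q r s : C) (ma : q ⟶ r) (mb : q ⟶ s)
    (ms : List (Mor C))
    (horb : ∃ g ∈ DeckSet p, morMap g ⟨q, r, ma⟩ = (⟨q, s, mb⟩ : Mor C)) :
    (∃ g ∈ DeckSet p, morMap g ⟨q, r, ma⟩ = (⟨q, s, mb⟩ : Mor C) ∧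
      ∀ m ∈ ms, morMap g m = m) ∧
    (⟨q, r, ma⟩ : Mor C) = ⟨q, s, mb⟩ := by
  obtain ⟨g, hg, hgm⟩ := horb
  have hfix := hp.morMap_eq_self hg.2 (congrArg Sigma.fst hgm)
  exact ⟨⟨g, hg, hgm, fun m _ => hfix m⟩, (hfix _).symm.trans hgm⟩

/-- Babson–Kozlov condition for the Galois action of a covering of acyclic
categories: if `(m₁,…,m_{t-1},m_a)` and `(m₁,…,m_{t-1},m_b)` are composable
chains (`t ≥ 2`, i.e. the common initial chain `ms` is nonempty) and `m_a`,
`m_b` lie in the same `G`-orbit, then some `g ∈ G` satisfies `g m_a = m_b` and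
`g mᵢ = mᵢ` for all `i < t`; consequently `m_a = m_b`. -/
theorem babson_kozlov_condition {C D : Type*} [Category C] [Category D]
    [IsConnected C]
    (hC : IsAcyclicCat C) (hD : IsAcyclicCat D)
    (p : C ⥤ D) (hp : IsCatCovering p)
    (hGalois : ∀ c c' : C, p.obj c = p.obj c' →
      ∃ φ ∈ DeckSet p, φ.obj c = c')
    (q r s : C) (ma : q ⟶ r) (mb : q ⟶ s)
    (ms : List (Mor C)) (hne : ms ≠ [])
    (hchaina : ChainOK (ms ++ ([⟨q, r, ma⟩] : List (Mor C))))
    (hchainb : ChainOK (ms ++ ([⟨q, s, mb⟩] : List (Mor C))))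
    (horb : ∃ g ∈ DeckSet p, morMap g ⟨q, r, ma⟩ = (⟨q, s, mb⟩ : Mor C)) :
    (∃ g ∈ DeckSet p, morMap g ⟨q, r, ma⟩ = (⟨q, s, mb⟩ : Mor C) ∧
      ∀ m ∈ ms, morMap g m = m) ∧
    (⟨q, r, ma⟩ : Mor C) = ⟨q, s, mb⟩ :=
  babson_kozlov_condition_general p hp q r s ma mb ms horb
end

section
/- Let $\scr A$ be a complexified essential toric arrangement on $T_\Lambda$, with complement $M(\scr A)$, and let $\epsilon : \pi_1(M(\scr A)) \to \pi_1(T_\Lambda) \cong \mathbb{Z}^n$ be the homomorphism induced by inclusion. Then $\epsilon$ admits a group-theoretic section $\xi$ with $\epsilon \circ \xi = \mathrm{id}$. -/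
/-!
In logarithmic coordinates `z ↦ (log ‖zᵢ‖)ᵢ` the hypersurface `{χ_p = a}` with `‖a‖ = 1` lies
over the real hyperplane `⟨p, ·⟩ = 0`. Choose `c` off all these hyperplanes and on the same
closed side of each of them as `log ‖x₀‖`. Moving every point of the torus radially to
log-radius `c` lands in the complement `M` and is homotopic to the identity, and the track of
`x₀` under this homotopy (log-radius `(1 - t) c + t log ‖x₀‖`) never meets a hypersurface. The
retraction, conjugated by that track, is a section of `π₁(M, x₀) → π₁(T, x₀)`.
-/

open CategoryTheory FundamentalGroupoid
open scoped FundamentalGroupoid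

/-- The functor between fundamental groupoids induced by a continuous map. -/
noncomputable def piFunctor {X Y : Type} [TopologicalSpace X] [TopologicalSpace Y]
    (f : C(X, Y)) : FundamentalGroupoid X ⥤ FundamentalGroupoid Y :=
  fundamentalGroupoidFunctor.map (X := TopCat.of X) (Y := TopCat.of Y) (TopCat.ofHom f)

/-- The homomorphism of fundamental groups induced by a continuous map. -/
noncomputable def pi1map {X Y : Type} [TopologicalSpace X] [TopologicalSpace Y]
    (f : C(X, Y)) (x : X) : FundamentalGroup X x →* FundamentalGroup Y (f x) :=
  Functor.mapEnd (FundamentalGroupoid.mk x) (piFunctor f)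

theorem pi1map_exists_rightInverse_of_homotopy {M X : Type} [TopologicalSpace M]
    [TopologicalSpace X] (ι : C(M, X)) (g : C(X, M)) (x₀ : M)
    (H : ContinuousMap.Homotopy (ι.comp g) (ContinuousMap.id X)) (β : Path (g (ι x₀)) x₀)
    (hβ : (β.map ι.continuous).Homotopic (H.evalAt (ι x₀))) :
    ∃ ξ : FundamentalGroup X (ι x₀) →* FundamentalGroup M x₀,
      (pi1map ι x₀).comp ξ = MonoidHom.id _ := by
  let e : FundamentalGroupoid.mk (g (ι x₀)) ≅ FundamentalGroupoid.mk x₀ :=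
    (Groupoid.isoEquivHom _ _).symm (Path.Homotopic.Quotient.mk β)
  have he : (FundamentalGroupoidFunctor.homotopicMapsNatIso H).app
      (FundamentalGroupoid.mk (ι x₀)) = (piFunctor ι).map e.hom :=
    (Path.Homotopic.Quotient.eq.mpr hβ).symm
  refine ⟨e.conj.toMonoidHom.comp (pi1map g (ι x₀)), ?_⟩
  ext γ
  -- On a representative path, `map (ι.comp g)` and `map g ⋙ map ι` agree definitionally.
  obtain ⟨p, rfl⟩ := Path.Homotopic.Quotient.mk_surjective γ
  let δ : End (FundamentalGroupoid.mk (g (ι x₀))) := (piFunctor g).map ⟦p⟧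
  have nat : (piFunctor ι).map δ ≫ (piFunctor ι).map e.hom = (piFunctor ι).map e.hom ≫ ⟦p⟧ :=
    he ▸ (FundamentalGroupoidFunctor.homotopicMapsNatIso H).naturality ⟦p⟧
  change (piFunctor ι).map (e.conj δ) = ⟦p⟧
  rw [Functor.map_conj, Iso.conj_apply, Functor.mapIso_hom, nat]
  exact ((piFunctor ι).mapIso e).inv_hom_id_assoc _

theorem ContinuousLinearMap.dense_setOf_apply_ne_zero {E : Type*} [AddCommGroup E]
    [Module ℝ E] [TopologicalSpace E] [ContinuousAdd E] [ContinuousSMul ℝ E]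
    {f : E →L[ℝ] ℝ} (hf : f ≠ 0) : Dense {c | f c ≠ 0} := by
  have hker : interior (LinearMap.ker (f : E →ₗ[ℝ] ℝ) : Set E) = ∅ := by
    by_contra h
    have := (LinearMap.ker (f : E →ₗ[ℝ] ℝ)).eq_top_of_nonempty_interior'
      (Set.nonempty_iff_ne_empty.mpr h)
    exact hf (ContinuousLinearMap.coe_injective (LinearMap.ker_eq_top.mp this))
  exact interior_eq_empty_iff_dense_compl.mp hker

theorem exists_forall_apply_ne_zero_and_mul_nonneg {E ι : Type*} [AddCommGroup E]
    [Module ℝ E] [TopologicalSpace E] [ContinuousAdd E] [ContinuousSMul ℝ E] (s : Finset ι)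
    (f : ι → E →L[ℝ] ℝ) (w : E) :
    ∃ c, ∀ i ∈ s, f i ≠ 0 → f i c ≠ 0 ∧ 0 ≤ f i c * f i w := by
  set U := ⋂ i ∈ s, {c | f i w ≠ 0 → 0 < f i c * f i w}
  have hU : IsOpen U := by
    refine isOpen_biInter_finset fun i _ => ?_
    by_cases hw : f i w = 0
    · simp [hw]
    · simpa [hw] using isOpen_lt continuous_const ((f i).continuous.mul continuous_const)
  have hwU : w ∈ U := Set.mem_iInter₂.mpr fun i _ hw => mul_self_pos.mpr hw
  have hdense : Dense (⋂₀ ((fun i => {c | f i ≠ 0 → f i c ≠ 0}) '' s)) := by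
    refine (s.finite_toSet.image _).dense_sInter ?_ ?_ <;> rintro _ ⟨i, -, rfl⟩ <;>
      by_cases hf : f i = 0
    · simp [hf]
    · simpa [hf] using isOpen_ne_fun (f i).continuous continuous_const
    · simp [hf]
    · simpa [hf] using (f i).dense_setOf_apply_ne_zero hf
  obtain ⟨c, hc, hcU⟩ := hdense.exists_mem_open hU ⟨w, hwU⟩
  refine ⟨c, fun i hi hf => ⟨Set.mem_sInter.mp hc _ ⟨i, hi, rfl⟩ hf, ?_⟩⟩
  by_cases hw : f i w = 0
  · simp [hw]
  · exact (Set.mem_iInter₂.mp hcU i hi hw).le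

theorem eq_one_of_one_sub_mul_add_mul_eq_zero {a b t : ℝ} (ha : a ≠ 0) (hab : 0 ≤ a * b)
    (ht₀ : 0 ≤ t) (ht₁ : t ≤ 1) (h : (1 - t) * a + t * b = 0) : t = 1 := by
  by_contra ht
  have hpos : 0 < (1 - t) * (a * a) :=
    mul_pos (sub_pos.mpr (lt_of_le_of_ne ht₁ ht)) (mul_self_pos.mpr ha)
  have hzero : ((1 - t) * a + t * b) * a = 0 := by rw [h, zero_mul]
  nlinarith [mul_nonneg ht₀ hab]

namespace ComplexTorus

variable {n : ℕ}

noncomputable def realExpUnit (r : ℝ) : ℂˣ :=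
  Units.mk0 (Real.exp r : ℂ) (Complex.ofReal_ne_zero.mpr (Real.exp_pos r).ne')

theorem norm_realExpUnit (r : ℝ) : ‖((realExpUnit r : ℂˣ) : ℂ)‖ = Real.exp r := by
  simp [realExpUnit]

@[simp]
theorem realExpUnit_zero : realExpUnit 0 = 1 := by
  ext; simp [realExpUnit]

theorem continuous_realExpUnit : Continuous realExpUnit :=
  Units.isEmbedding_val₀.continuous_iff.mpr (by unfold realExpUnit; fun_prop)

noncomputable def logAbs (z : Fin n → ℂˣ) : Fin n → ℝ := fun i => Real.log ‖(z i : ℂ)‖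

theorem continuous_logAbs : Continuous (logAbs (n := n)) :=
  continuous_pi fun i => (continuous_norm.comp (Units.continuous_val.comp
    (continuous_apply i))).log fun z => norm_ne_zero_iff.mpr (z i).ne_zero

noncomputable def rescale (v : Fin n → ℝ) (z : Fin n → ℂˣ) : Fin n → ℂˣ :=
  fun i => z i * realExpUnit (v i)

theorem logAbs_rescale (v : Fin n → ℝ) (z : Fin n → ℂˣ) :
    logAbs (rescale v z) = logAbs z + v := by
  funext i
  simp only [logAbs, rescale, Units.val_mul, norm_mul, norm_realExpUnit, Pi.add_apply]
  rw [Real.log_mul (norm_ne_zero_iff.mpr (z i).ne_zero) (Real.exp_pos _).ne', Real.log_exp]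

@[simp]
theorem rescale_zero (z : Fin n → ℂˣ) : rescale 0 z = z := by
  funext i; simp [rescale]

theorem continuous_rescale :
    Continuous fun q : (Fin n → ℝ) × (Fin n → ℂˣ) => rescale q.1 q.2 :=
  continuous_pi fun i => ((continuous_apply i).comp continuous_snd).mul
    (continuous_realExpUnit.comp ((continuous_apply i).comp continuous_fst))

noncomputable def charWeight (p : Fin n → ℤ) : (Fin n → ℝ) →L[ℝ] ℝ :=
  ∑ i, (p i : ℝ) • ContinuousLinearMap.proj i

theorem charWeight_apply (p : Fin n → ℤ) (v : Fin n → ℝ) :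
    charWeight p v = ∑ i, (p i : ℝ) * v i := by
  simp [charWeight]

theorem charWeight_ne_zero {p : Fin n → ℤ} (hp : p ≠ 0) : charWeight p ≠ 0 := by
  obtain ⟨j, hj⟩ := Function.ne_iff.mp hp
  intro h
  exact hj (by simpa [charWeight_apply, Pi.single_apply] using congrArg (· (Pi.single j 1)) h)

theorem norm_prod_zpow (z : Fin n → ℂˣ) (p : Fin n → ℤ) :
    ‖((∏ i, z i ^ p i : ℂˣ) : ℂ)‖ = Real.exp (charWeight p (logAbs z)) := by
  rw [charWeight_apply, Real.exp_sum, Units.coe_prod, norm_prod]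
  refine Finset.prod_congr rfl fun i _ => ?_
  rw [Units.val_zpow_eq_zpow_val, norm_zpow, logAbs, mul_comm, Real.exp_mul,
    Real.exp_log (norm_pos_iff.mpr (z i).ne_zero), Real.rpow_intCast]

def toricComplement (A : Finset ((Fin n → ℤ) × ℂˣ)) : Set (Fin n → ℂˣ) :=
  {x | ∀ p ∈ A, (∏ i, x i ^ p.1 i) ≠ p.2}

theorem mem_toricComplement_of_charWeight_eq_zero {A : Finset ((Fin n → ℤ) × ℂˣ)}
    (hA : ∀ p ∈ A, ‖((p.2 : ℂˣ) : ℂ)‖ = 1) {x₀ z : Fin n → ℂˣ} (hx₀ : x₀ ∈ toricComplement A)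
    (h : ∀ p ∈ A, p.1 ≠ 0 → charWeight p.1 (logAbs z) = 0 →
      ∏ i, z i ^ p.1 i = ∏ i, x₀ i ^ p.1 i) :
    z ∈ toricComplement A := by
  intro p hp hz
  by_cases hp0 : p.1 = 0
  · exact hx₀ p hp (by simpa [hp0] using hz)
  · have hweight : charWeight p.1 (logAbs z) = 0 := by
      rw [← Real.exp_eq_one_iff, ← norm_prod_zpow, hz, hA p hp]
    exact hx₀ p hp (h p hp hp0 hweight ▸ hz)

noncomputable def radialRetraction (c : Fin n → ℝ) : C(Fin n → ℂˣ, Fin n → ℂˣ) :=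
  ⟨fun z => rescale (c - logAbs z) z,
    continuous_rescale.comp ((continuous_const.sub continuous_logAbs).prodMk continuous_id)⟩

theorem logAbs_radialRetraction (c : Fin n → ℝ) (z : Fin n → ℂˣ) :
    logAbs (radialRetraction c z) = c := by
  simp [radialRetraction, logAbs_rescale]

noncomputable def radialHomotopy (c : Fin n → ℝ) :
    (radialRetraction c).Homotopy (ContinuousMap.id _) where
  toFun q := rescale ((1 - (q.1 : ℝ)) • (c - logAbs q.2)) q.2
  continuous_toFun := continuous_rescale.comp <|
    (((continuous_const.sub (continuous_subtype_val.comp continuous_fst)).smul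
      (continuous_const.sub (continuous_logAbs.comp continuous_snd))).prodMk continuous_snd)
  map_zero_left z := by simp [radialRetraction]
  map_one_left z := by simp

theorem logAbs_radialHomotopy (c : Fin n → ℝ) (t : unitInterval) (z : Fin n → ℂˣ) :
    logAbs (radialHomotopy c (t, z)) = (1 - (t : ℝ)) • c + (t : ℝ) • logAbs z := by
  change logAbs (rescale _ z) = _
  rw [logAbs_rescale]
  module

section Retraction

variable {A : Finset ((Fin n → ℤ) × ℂˣ)} (hA : ∀ p ∈ A, ‖((p.2 : ℂˣ) : ℂ)‖ = 1)
  {x₀ : Fin n → ℂˣ} (hx₀ : x₀ ∈ toricComplement A) {c : Fin n → ℝ}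
  (hc : ∀ p ∈ A, charWeight p.1 ≠ 0 →
    charWeight p.1 c ≠ 0 ∧ 0 ≤ charWeight p.1 c * charWeight p.1 (logAbs x₀))
include hA hx₀ hc

theorem radialRetraction_mem (z : Fin n → ℂˣ) : radialRetraction c z ∈ toricComplement A :=
  mem_toricComplement_of_charWeight_eq_zero hA hx₀ fun p hp hp0 h =>
    absurd (logAbs_radialRetraction c z ▸ h) (hc p hp (charWeight_ne_zero hp0)).1

theorem radialHomotopy_mem (t : unitInterval) : radialHomotopy c (t, x₀) ∈ toricComplement A :=
  mem_toricComplement_of_charWeight_eq_zero hA hx₀ fun p hp hp0 h => by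
    obtain ⟨hcp, hsign⟩ := hc p hp (charWeight_ne_zero hp0)
    rw [logAbs_radialHomotopy, map_add, map_smul, map_smul, smul_eq_mul, smul_eq_mul] at h
    obtain rfl : t = 1 :=
      Subtype.ext (eq_one_of_one_sub_mul_add_mul_eq_zero hcp hsign t.2.1 t.2.2 h)
    rw [ContinuousMap.Homotopy.apply_one]
    rfl

end Retraction

end ComplexTorus

open ComplexTorus

theorem epsilon_has_section_general (n : ℕ)
    (A : Finset ((Fin n → ℤ) × ℂˣ))
    (hA : ∀ p ∈ A, ‖((p.2 : ℂˣ) : ℂ)‖ = 1)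
    (x₀ : ({x : Fin n → ℂˣ | ∀ p ∈ A, (∏ i, x i ^ p.1 i) ≠ p.2} : Set (Fin n → ℂˣ))) :
    ∃ ξ : FundamentalGroup (Fin n → ℂˣ)
        ((⟨Subtype.val, continuous_subtype_val⟩ :
          C(({x : Fin n → ℂˣ | ∀ p ∈ A, (∏ i, x i ^ p.1 i) ≠ p.2} : Set (Fin n → ℂˣ)),
            Fin n → ℂˣ)) x₀) →*
      FundamentalGroup
        ({x : Fin n → ℂˣ | ∀ p ∈ A, (∏ i, x i ^ p.1 i) ≠ p.2} : Set (Fin n → ℂˣ)) x₀,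
      (pi1map (⟨Subtype.val, continuous_subtype_val⟩ :
          C(({x : Fin n → ℂˣ | ∀ p ∈ A, (∏ i, x i ^ p.1 i) ≠ p.2} : Set (Fin n → ℂˣ)),
            Fin n → ℂˣ)) x₀).comp ξ = MonoidHom.id _ := by
  obtain ⟨c, hc⟩ :=
    exists_forall_apply_ne_zero_and_mul_nonneg A (charWeight ∘ Prod.fst) (logAbs x₀.1)
  let g : C(Fin n → ℂˣ, toricComplement A) :=
    ⟨fun z => ⟨radialRetraction c z, radialRetraction_mem hA x₀.2 hc z⟩,
      (map_continuous _).subtype_mk _⟩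
  let β : Path (g x₀) x₀ :=
    { toFun t := ⟨radialHomotopy c (t, x₀), radialHomotopy_mem hA x₀.2 hc t⟩
      continuous_toFun := by fun_prop
      source' := Subtype.ext ((radialHomotopy c).apply_zero x₀)
      target' := Subtype.ext ((radialHomotopy c).apply_one x₀) }
  exact pi1map_exists_rightInverse_of_homotopy _ g x₀ (radialHomotopy c) β (.refl _)

/-- Let `𝒜` be a complexified essential toric arrangement on the torus
`T_Λ ≅ (ℂ*)ⁿ` with complement `M(𝒜)`, and let
`ε : π₁(M(𝒜)) → π₁(T_Λ)` be induced by the inclusion.  Then `ε` admits a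
group-theoretic section `ξ` with `ε ∘ ξ = id`. -/
theorem epsilon_has_section (n : ℕ)
    (A : Finset ((Fin n → ℤ) × ℂˣ))
    (hA : ∀ p ∈ A, ‖((p.2 : ℂˣ) : ℂ)‖ = 1)
    (hess : Module.finrank ℤ
      (Submodule.span ℤ {v : Fin n → ℤ | ∃ p ∈ A, p.1 = v}) = n)
    (x₀ : ({x : Fin n → ℂˣ | ∀ p ∈ A, (∏ i, x i ^ p.1 i) ≠ p.2} : Set (Fin n → ℂˣ))) :
    ∃ ξ : FundamentalGroup (Fin n → ℂˣ)
        ((⟨Subtype.val, continuous_subtype_val⟩ :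
          C(({x : Fin n → ℂˣ | ∀ p ∈ A, (∏ i, x i ^ p.1 i) ≠ p.2} : Set (Fin n → ℂˣ)),
            Fin n → ℂˣ)) x₀) →*
      FundamentalGroup
        ({x : Fin n → ℂˣ | ∀ p ∈ A, (∏ i, x i ^ p.1 i) ≠ p.2} : Set (Fin n → ℂˣ)) x₀,
      (pi1map (⟨Subtype.val, continuous_subtype_val⟩ :
          C(({x : Fin n → ℂˣ | ∀ p ∈ A, (∏ i, x i ^ p.1 i) ≠ p.2} : Set (Fin n → ℂˣ)),
            Fin n → ℂˣ)) x₀).comp ξ = MonoidHom.id _ :=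
  epsilon_has_section_general n A hA x₀
end
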